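/- arXiv:2001.08259 — 2 statements merged into one kernel-verified Lean document; each statement's English description precedes it below -/
import Mathlib

section
/- Let A₁, A₂, c₁, c₂ be strictly positive real numbers and k a real number, and let f(s) = A₁·(2^(c₁·s) − 1) + A₂·(2^(c₂·s) − 1) + k·s. If A₁·c₁·(ln 2) + A₂·c₂·(ln 2) + k < 0 (the derivative of f at s = 0 is negative), then there exists a unique s* > 0 such that the derivative of f at s* is zero, and f(s*) < f(s) for every s ≥ 0 with s ≠ s*; that is, s* is the unique minimizer of f over [0, ∞). -/
/-! The derivative `f'(s) = A₁c₁ log 2 · 2^(c₁s) + A₂c₂ log 2 · 2^(c₂s) + k` is strictly increasing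
and tends to `+∞`. Since `f'(0) < 0`, Darboux's theorem gives a zero `s* > 0`, which is unique by
strict monotonicity; `f` then strictly decreases on `(-∞, s*]` and strictly increases on
`[s*, ∞)`, so `s*` is its strict global minimizer. -/

open Filter Set

section StrictMonoDeriv

variable {f f' : ℝ → ℝ}

theorem StrictMono.apply_lt_apply_of_hasDerivAt_of_eq_zero (hf' : StrictMono f')
    (hf : ∀ x, HasDerivAt f (f' x) x) {x₀ y : ℝ} (h₀ : f' x₀ = 0) (hy : y ≠ x₀) :
    f x₀ < f y := by
  have hderiv : deriv f = f' := funext fun x => (hf x).deriv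
  have hcont : Continuous f := continuous_iff_continuousAt.2 fun x => (hf x).continuousAt
  rcases hy.lt_or_gt with hlt | hgt
  · have hanti : StrictAntiOn f (Iic x₀) :=
      strictAntiOn_of_deriv_neg (convex_Iic x₀) hcont.continuousOn fun x hx => by
        rw [interior_Iic] at hx
        rw [hderiv, ← h₀]
        exact hf' hx
    exact hanti hlt.le self_mem_Iic hlt
  · have hmono : StrictMonoOn f (Ici x₀) :=
      strictMonoOn_of_deriv_pos (convex_Ici x₀) hcont.continuousOn fun x hx => by
        rw [interior_Ici] at hx
        rw [hderiv, ← h₀]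
        exact hf' hx
    exact hmono self_mem_Ici hgt.le hgt

theorem exists_pos_eq_zero_of_hasDerivAt_of_tendsto_atTop (hf : ∀ x, HasDerivAt f (f' x) x)
    (h₀ : f' 0 < 0) (htop : Tendsto f' atTop atTop) : ∃ x, 0 < x ∧ f' x = 0 := by
  obtain ⟨T, hfT, hT⟩ := ((htop.eventually_gt_atTop 0).and (eventually_gt_atTop 0)).exists
  obtain ⟨x, hx, hx₀⟩ := exists_hasDerivWithinAt_eq_of_gt_of_lt hT.le
    (fun x _ => (hf x).hasDerivWithinAt) h₀ hfT
  exact ⟨x, hx.1, hx₀⟩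

end StrictMonoDeriv

section ScaledExponential

variable {a b c : ℝ}

theorem strictMono_mul_rpow_mul (ha : 0 < a) (hb : 1 < b) (hc : 0 < c) :
    StrictMono fun s : ℝ => a * b ^ (c * s) := fun _ _ hst =>
  mul_lt_mul_of_pos_left (Real.rpow_lt_rpow_of_exponent_lt hb (mul_lt_mul_of_pos_left hst hc)) ha

theorem tendsto_mul_rpow_mul_atTop (ha : 0 < a) (hb : 1 < b) (hc : 0 < c) :
    Tendsto (fun s : ℝ => a * b ^ (c * s)) atTop atTop :=
  ((tendsto_rpow_atTop_of_base_gt_one b hb).comp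
    (tendsto_id.const_mul_atTop hc)).const_mul_atTop ha

theorem hasDerivAt_mul_rpow_mul_sub_one (a c s : ℝ) (hb : 0 < b) :
    HasDerivAt (fun s : ℝ => a * (b ^ (c * s) - 1)) (a * c * Real.log b * b ^ (c * s)) s := by
  refine ((((hasDerivAt_const_mul c).const_rpow hb).sub_const 1).const_mul a).congr_deriv ?_
  ring

end ScaledExponential

/-- second case of Lemma 1: if the derivative of
`f(s) = A₁·(2^(c₁s) − 1) + A₂·(2^(c₂s) − 1) + k·s` at `s = 0` is negative, then there is a
unique `s* > 0` at which the derivative of `f` vanishes and which strictly minimizes `f`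
over `[0, ∞)`. -/
theorem stmt4 (A₁ A₂ c₁ c₂ k : ℝ) (hA₁ : 0 < A₁) (hA₂ : 0 < A₂) (hc₁ : 0 < c₁) (hc₂ : 0 < c₂)
    (hgrad : A₁ * c₁ * Real.log 2 + A₂ * c₂ * Real.log 2 + k < 0) :
    ∃! sstar : ℝ, 0 < sstar ∧
      deriv (fun s : ℝ => A₁ * ((2 : ℝ) ^ (c₁ * s) - 1) + A₂ * ((2 : ℝ) ^ (c₂ * s) - 1) + k * s)
        sstar = 0 ∧
      ∀ s : ℝ, 0 ≤ s → s ≠ sstar →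
        (A₁ * ((2 : ℝ) ^ (c₁ * sstar) - 1) + A₂ * ((2 : ℝ) ^ (c₂ * sstar) - 1) + k * sstar)
          < A₁ * ((2 : ℝ) ^ (c₁ * s) - 1) + A₂ * ((2 : ℝ) ^ (c₂ * s) - 1) + k * s := by
  set f' : ℝ → ℝ := fun s => A₁ * c₁ * Real.log 2 * (2 : ℝ) ^ (c₁ * s)
    + A₂ * c₂ * Real.log 2 * (2 : ℝ) ^ (c₂ * s) + k
  have hf : ∀ s, HasDerivAt (fun s : ℝ => A₁ * ((2 : ℝ) ^ (c₁ * s) - 1)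
      + A₂ * ((2 : ℝ) ^ (c₂ * s) - 1) + k * s) (f' s) s := fun s =>
    ((hasDerivAt_mul_rpow_mul_sub_one A₁ c₁ s two_pos).add
      (hasDerivAt_mul_rpow_mul_sub_one A₂ c₂ s two_pos)).add (hasDerivAt_const_mul k)
  have hmono : StrictMono f' :=
    ((strictMono_mul_rpow_mul (by positivity) one_lt_two hc₁).add
      (strictMono_mul_rpow_mul (by positivity) one_lt_two hc₂)).add_const k
  have htop : Tendsto f' atTop atTop :=
    tendsto_atTop_add_const_right _ k <|
      (tendsto_mul_rpow_mul_atTop (by positivity) one_lt_two hc₁).atTop_add_atTop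
        (tendsto_mul_rpow_mul_atTop (by positivity) one_lt_two hc₂)
  have h₀ : f' 0 < 0 := by simpa [f'] using hgrad
  obtain ⟨sstar, hpos, hzero⟩ := exists_pos_eq_zero_of_hasDerivAt_of_tendsto_atTop hf h₀ htop
  refine ⟨sstar, ⟨hpos, (hf sstar).deriv.trans hzero, fun s _ hs =>
    hmono.apply_lt_apply_of_hasDerivAt_of_eq_zero hf hzero hs⟩, ?_⟩
  rintro y ⟨-, hy, -⟩
  exact hmono.injective (((hf y).deriv.symm.trans hy).trans hzero.symm)
end

section
/- Let σ² > 0, Γ ≥ 1, N > 0, γ > 0, B > 0, ν > 0, s > 0, 0 ≤ w < 1 and c > 0. Then there exists a unique t > 0 satisfying the stationarity equation (1 − w)·[ (2^(s/(ν B t)) − 1)·Γσ²/(Nγ) − (s·ln 2/(ν B t))·2^(s/(ν B t))·Γσ²/(Nγ) ] + c = 0. -/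
/-!
With `y = s ln 2 / (νBt)` the left-hand side equals `c - (1 - w)(Γσ²/(Nγ)) (1 - e^y + y e^y)`.
The bracket vanishes at `0`, has derivative `y e^y > 0` and is at least `y²` for `y ≥ 1`, so it
takes every positive value exactly once on `y > 0`; and `t ↦ y` is a bijection of `(0, ∞)`.
-/

open Real Set

noncomputable def expTangentGap (y : ℝ) : ℝ :=
  1 - exp y + y * exp y

lemma expTangentGap_zero : expTangentGap 0 = 0 := by
  simp [expTangentGap]

lemma hasDerivAt_expTangentGap (y : ℝ) : HasDerivAt expTangentGap (y * exp y) y :=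
  (((hasDerivAt_exp y).const_sub 1).add ((hasDerivAt_id' y).mul (hasDerivAt_exp y))).congr_deriv
    (by ring)

lemma continuous_expTangentGap : Continuous expTangentGap :=
  continuous_iff_continuousAt.2 fun y => (hasDerivAt_expTangentGap y).continuousAt

lemma strictMonoOn_expTangentGap : StrictMonoOn expTangentGap (Ici 0) := by
  refine strictMonoOn_of_deriv_pos (convex_Ici 0) continuous_expTangentGap.continuousOn ?_
  intro y hy
  rw [interior_Ici] at hy
  rw [(hasDerivAt_expTangentGap y).deriv]
  exact mul_pos hy (exp_pos y)

lemma sq_le_expTangentGap {y : ℝ} (hy : 1 ≤ y) : y ^ 2 ≤ expTangentGap y := by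
  have h := add_one_le_exp y
  unfold expTangentGap
  nlinarith

lemma existsUnique_pos_expTangentGap_eq {d : ℝ} (hd : 0 < d) :
    ∃! y, 0 < y ∧ expTangentGap y = d := by
  set b := max 1 d
  have hb : 1 ≤ b := le_max_left 1 d
  have hdb : d ≤ expTangentGap b :=
    calc d ≤ b := le_max_right 1 d
      _ ≤ b ^ 2 := by nlinarith
      _ ≤ expTangentGap b := sq_le_expTangentGap hb
  obtain ⟨y, ⟨hy₀, -⟩, hy⟩ :=
    intermediate_value_Icc (zero_le_one.trans hb) continuous_expTangentGap.continuousOn ⟨by rw [expTangentGap_zero]; exact hd.le, hdb⟩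
  have hy_pos : 0 < y := hy₀.lt_of_ne (by rintro rfl; rw [expTangentGap_zero] at hy; linarith)
  refine ⟨y, ⟨hy_pos, hy⟩, fun z ⟨hz, hzd⟩ => ?_⟩
  exact strictMonoOn_expTangentGap.injOn hz.le hy_pos.le (hzd.trans hy.symm)

lemma existsUnique_pos_div_eq {f : ℝ → ℝ} {a d : ℝ} (ha : 0 < a)
    (h : ∃! y, 0 < y ∧ f y = d) : ∃! t, 0 < t ∧ f (a / t) = d := by
  obtain ⟨y, ⟨hy, hfy⟩, huniq⟩ := h
  refine ⟨a / y, ⟨div_pos ha hy, by rwa [div_div_cancel₀ ha.ne']⟩, fun t ⟨ht, hft⟩ => ?_⟩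
  rw [← huniq (a / t) ⟨div_pos ha ht, hft⟩, div_div_cancel₀ ha.ne']

theorem stmt12_general (σ2 Γ N γ B ν s w c : ℝ) (hσ2 : 0 < σ2) (hΓ : 1 ≤ Γ) (hN : 0 < N)
    (hγ : 0 < γ) (hB : 0 < B) (hν : 0 < ν) (hs : 0 < s) (hw₁ : w < 1)
    (hc : 0 < c) :
    ∃! t : ℝ, 0 < t ∧
      (1 - w) * (((2 : ℝ) ^ (s / (ν * B * t)) - 1) * Γ * σ2 / (N * γ)
        - (s * Real.log 2 / (ν * B * t)) * (2 : ℝ) ^ (s / (ν * B * t)) * Γ * σ2 / (N * γ))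
        + c = 0 := by
  set K := (1 - w) * (Γ * σ2 / (N * γ))
  set a := s * log 2 / (ν * B) with ha_def
  have hK : 0 < K := mul_pos (by linarith) (by positivity)
  have ha : 0 < a := div_pos (mul_pos hs (log_pos one_lt_two)) (by positivity)
  have hlhs : ∀ t : ℝ, (1 - w) * (((2 : ℝ) ^ (s / (ν * B * t)) - 1) * Γ * σ2 / (N * γ)
        - (s * Real.log 2 / (ν * B * t)) * (2 : ℝ) ^ (s / (ν * B * t)) * Γ * σ2 / (N * γ))
        + c = c - K * expTangentGap (a / t) := by
    intro t
    have hexp : (2 : ℝ) ^ (s / (ν * B * t)) = exp (a / t) := by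
      rw [rpow_def_of_pos two_pos, ha_def]; ring_nf
    rw [hexp, expTangentGap]
    ring
  refine (existsUnique_congr fun t => ?_).1
    (existsUnique_pos_div_eq ha (existsUnique_pos_expTangentGap_eq (div_pos hc hK)))
  rw [hlhs, eq_div_iff hK.ne', sub_eq_zero, mul_comm, eq_comm]

/-- Theorem 1 for the uplink offloading time: for `σ² > 0`, `Γ ≥ 1`,
`N, γ, B, ν, s > 0`, `0 ≤ w < 1` and `c > 0`, the KKT stationarity equation (25)
`(1 − w)·[(2^(s/(νBt)) − 1)·Γσ²/(Nγ) − (s·ln 2/(νBt))·2^(s/(νBt))·Γσ²/(Nγ)] + c = 0`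
has a unique positive solution `t`. -/
theorem stmt12 (σ2 Γ N γ B ν s w c : ℝ) (hσ2 : 0 < σ2) (hΓ : 1 ≤ Γ) (hN : 0 < N)
    (hγ : 0 < γ) (hB : 0 < B) (hν : 0 < ν) (hs : 0 < s) (hw₀ : 0 ≤ w) (hw₁ : w < 1)
    (hc : 0 < c) :
    ∃! t : ℝ, 0 < t ∧
      (1 - w) * (((2 : ℝ) ^ (s / (ν * B * t)) - 1) * Γ * σ2 / (N * γ)
        - (s * Real.log 2 / (ν * B * t)) * (2 : ℝ) ^ (s / (ν * B * t)) * Γ * σ2 / (N * γ))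
        + c = 0 :=
  stmt12_general σ2 Γ N γ B ν s w c hσ2 hΓ hN hγ hB hν hs hw₁ hc
end
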